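/- arXiv:0811.3370 — 2 statements merged into one kernel-verified Lean document; each statement's English description precedes it below -/
import Mathlib

section
/- Let τ be a proper involution in Diffeo (τ∘τ = id, τ ≠ id), and define ψ(x) = (x − τ(x))/2 for x ∈ ℝ. Then ψ is an orientation-preserving (strictly increasing) C^∞ diffeomorphism of ℝ and ψ(τ(x)) = −ψ(x) for every x ∈ ℝ. -/
/-!
A continuous involution of `ℝ` is injective, hence strictly monotone or strictly antitone, and a
monotone involution is the identity; so `τ` is decreasing. Then `ψ = (id - τ) / 2` is strictly
increasing with `ψ' = (1 - τ') / 2 ≥ 1 / 2`, and `ψ x` grows at least like `x / 2` on both sides,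
so `ψ` is a smooth bijection with nowhere vanishing derivative and its inverse is smooth by the
inverse function theorem.
-/

/-- `f` is a C^∞ diffeomorphism of ℝ: a bijection such that both `f` and its
inverse are infinitely differentiable. -/
def IsDiffeo (f : ℝ → ℝ) : Prop :=
  Function.Bijective f ∧ ContDiff ℝ (⊤ : ℕ∞) f ∧ ContDiff ℝ (⊤ : ℕ∞) (Function.invFun f)

open Function

theorem Monotone.eq_id_of_involutive {α : Type*} [LinearOrder α] {f : α → α}
    (hf : Monotone f) (hinv : Involutive f) : f = id := by
  funext x
  rcases le_total (f x) x with h | h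
  · exact le_antisymm h ((hinv x).symm.trans_le (hf h))
  · exact le_antisymm ((hf h).trans_eq (hinv x)) h

theorem Continuous.strictAnti_of_involutive {α : Type*} [ConditionallyCompleteLinearOrder α]
    [DenselyOrdered α] [TopologicalSpace α] [OrderTopology α] {f : α → α}
    (hc : Continuous f) (hinv : Involutive f) (hne : f ≠ id) : StrictAnti f :=
  (hc.strictMono_of_inj hinv.injective).resolve_left fun h ↦
    hne (h.monotone.eq_id_of_involutive hinv)

theorem isDiffeo_of_strictMono_of_deriv_ne_zero {f : ℝ → ℝ} (hmono : StrictMono f)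
    (hsurj : Surjective f) (hf : ContDiff ℝ (⊤ : ℕ∞) f) (hf' : ∀ x, deriv f x ≠ 0) : IsDiffeo f := by
  let e := (hmono.orderIsoOfSurjective f hsurj).toHomeomorph
  have he : invFun f = e.symm := funext fun y ↦
    hmono.injective <| (rightInverse_invFun hsurj y).trans (e.apply_symm_apply y).symm
  refine ⟨⟨hmono.injective, hsurj⟩, hf, he ▸ e.contDiff_symm_deriv hf' (fun x ↦ ?_) hf⟩
  exact (hf.differentiable (by simp) x).hasDerivAt

section HalfSub

variable {g : ℝ → ℝ}

theorem Antitone.strictMono_half_sub (hg : Antitone g) : StrictMono fun x ↦ (x - g x) / 2 :=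
  fun a b hab ↦ by linarith [hg hab.le]

theorem Antitone.surjective_half_sub (hg : Antitone g) (hc : Continuous g) :
    Surjective fun x ↦ (x - g x) / 2 := by
  intro y
  -- `g ≤ g 0` on `[0, ∞)` and `g 0 ≤ g` on `(-∞, 0]`, so `2 * y + g 0` clipped to either side
  -- of `0` brackets a preimage of `y`.
  refine mem_range_of_exists_le_of_exists_ge (by fun_prop)
    ⟨min 0 (2 * y + g 0), ?_⟩ ⟨max 0 (2 * y + g 0), ?_⟩
  · linarith [hg (min_le_left 0 (2 * y + g 0)), min_le_right 0 (2 * y + g 0)]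
  · linarith [hg (le_max_left 0 (2 * y + g 0)), le_max_right 0 (2 * y + g 0)]

theorem Antitone.deriv_half_sub_pos (hg : Antitone g) (hd : Differentiable ℝ g) (x : ℝ) :
    0 < deriv (fun x ↦ (x - g x) / 2) x := by
  rw [((hasDerivAt_id' x).fun_sub (hd x).hasDerivAt).div_const 2 |>.deriv]
  linarith [hg.deriv_nonpos (x := x)]

theorem Antitone.isDiffeo_half_sub (hg : Antitone g) (hs : ContDiff ℝ (⊤ : ℕ∞) g) :
    IsDiffeo fun x ↦ (x - g x) / 2 :=
  isDiffeo_of_strictMono_of_deriv_ne_zero hg.strictMono_half_sub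
    (hg.surjective_half_sub hs.continuous) (by fun_prop) fun x ↦ (hg.deriv_half_sub_pos (hs.differentiable (by simp)) x).ne'

end HalfSub

theorem involution_linearizer
    (τ : ℝ → ℝ) (hτ : IsDiffeo τ) (hinv : τ ∘ τ = id) (hne : τ ≠ id)
    (ψ : ℝ → ℝ) (hψ : ∀ x : ℝ, ψ x = (x - τ x) / 2) :
    IsDiffeo ψ ∧ StrictMono ψ ∧ ∀ x : ℝ, ψ (τ x) = -ψ x := by
  have hτ_involutive : Involutive τ := congrFun hinv
  have hτ_anti : Antitone τ :=
    (hτ.2.1.continuous.strictAnti_of_involutive hτ_involutive hne).antitone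
  obtain rfl : ψ = fun x ↦ (x - τ x) / 2 := funext hψ
  refine ⟨hτ_anti.isDiffeo_half_sub hτ.2.1, hτ_anti.strictMono_half_sub, fun x ↦ ?_⟩
  simp only [hτ_involutive x]
  ring
end

section
/- Let f and g be orientation-reversing C^∞ diffeomorphisms of ℝ fixing 0 with f∘f = g∘g, and suppose 0 is an interior point of fix(f∘f) (so f is involutive on a neighbourhood of 0). Then there exists h ∈ Diffeo⁺ fixing 0 and commuting with f∘f such that T_0 f = (T_0 g)^(T_0 h), i.e. h∘f and g∘h have equal n-th derivatives at 0 for all n ≥ 1; and hence there exists k ∈ Diffeo⁺ with f = k⁻¹ ∘ g ∘ k. -/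
open Function Filter Set Topology

namespace IsDiffeo

variable {f g : ℝ → ℝ}

lemma contDiff (hf : IsDiffeo f) : ContDiff ℝ (⊤ : ℕ∞) f := hf.2.1

lemma differentiable (hf : IsDiffeo f) : Differentiable ℝ f :=
  hf.contDiff.differentiable (by simp)

lemma invFun_apply_apply (hf : IsDiffeo f) (x : ℝ) : invFun f (f x) = x :=
  leftInverse_invFun hf.1.1 x

lemma apply_invFun_apply (hf : IsDiffeo f) (y : ℝ) : f (invFun f y) = y :=
  rightInverse_invFun hf.1.2 y

lemma invFun (hf : IsDiffeo f) : IsDiffeo (invFun f) := by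
  have hbij : Bijective (Function.invFun f) :=
    ⟨(rightInverse_invFun hf.1.2).injective, (leftInverse_invFun hf.1.1).surjective⟩
  have hinv : Function.invFun (Function.invFun f) = f :=
    invFun_eq_of_injective_of_rightInverse hbij.1 (leftInverse_invFun hf.1.1)
  exact ⟨hbij, hf.2.2, by rw [hinv]; exact hf.2.1⟩

lemma comp (hg : IsDiffeo g) (hf : IsDiffeo f) : IsDiffeo (g ∘ f) := by
  have hinv : Function.invFun (g ∘ f) = Function.invFun f ∘ Function.invFun g :=
    invFun_eq_of_injective_of_rightInverse (hg.1.1.comp hf.1.1)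
      ((rightInverse_invFun hg.1.2).comp (rightInverse_invFun hf.1.2))
  exact ⟨hg.1.comp hf.1, hg.2.1.comp hf.2.1, hinv ▸ hf.2.2.comp hg.2.2⟩

lemma deriv_ne_zero (hf : IsDiffeo f) (x : ℝ) : deriv f x ≠ 0 := by
  have hchain : HasDerivAt (Function.invFun f ∘ f)
      (deriv (Function.invFun f) (f x) * deriv f x) x :=
    (hf.invFun.differentiable _).hasDerivAt.comp x (hf.differentiable x).hasDerivAt
  rw [invFun_comp hf.1.1] at hchain
  exact right_ne_zero_of_mul_eq_one (hchain.unique (hasDerivAt_id x))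

end IsDiffeo

lemma isDiffeo_of_strictMono {k : ℝ → ℝ} (hmono : StrictMono k) (hsurj : Surjective k)
    (hk : ContDiff ℝ (⊤ : ℕ∞) k) (hk' : ∀ x, deriv k x ≠ 0) : IsDiffeo k := by
  let e := (hmono.orderIsoOfSurjective k hsurj).toHomeomorph
  have he : (e.symm : ℝ → ℝ) = invFun k := by
    funext y
    apply hmono.injective
    rw [rightInverse_invFun hsurj y]
    exact e.apply_symm_apply y
  refine ⟨⟨hmono.injective, hsurj⟩, hk, he ▸ e.contDiff_symm_deriv hk' (fun x => ?_) hk⟩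
  exact (hk.differentiable (by simp) x).hasDerivAt

lemma isDiffeo_of_eventuallyEq_isDiffeo {k : ℝ → ℝ} (hmono : StrictMono k)
    (hsurj : Surjective k) (hloc : ∀ x, ∃ p, IsDiffeo p ∧ k =ᶠ[𝓝 x] p) : IsDiffeo k := by
  choose p hp hkp using hloc
  refine isDiffeo_of_strictMono hmono hsurj ?_ fun x => ?_
  · exact contDiff_iff_contDiffAt.2 fun x =>
      (hp x).contDiff.contDiffAt.congr_of_eventuallyEq (hkp x)
  · rw [(hkp x).deriv_eq]
    exact (hp x).deriv_ne_zero x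

lemma isDiffeo_of_le_deriv {u : ℝ → ℝ} {c : ℝ} (hc : 0 < c) (hu : ContDiff ℝ (⊤ : ℕ∞) u)
    (hu' : ∀ x, c ≤ deriv u x) : IsDiffeo u ∧ StrictMono u := by
  have hd : Differentiable ℝ u := hu.differentiable (by simp)
  have hmono : StrictMono u := strictMono_of_deriv_pos fun x => hc.trans_le (hu' x)
  have hgrowth := mul_sub_le_image_sub_of_le_deriv hd hu'
  have htop : Tendsto u atTop atTop := by
    refine tendsto_atTop_mono' _ ?_
      ((tendsto_id.const_mul_atTop hc).atTop_add (tendsto_const_nhds (x := u 0)))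
    filter_upwards [eventually_ge_atTop 0] with x hx
    linarith [hgrowth hx, show c * id x = c * (x - 0) by simp]
  have hbot : Tendsto u atBot atBot := by
    refine tendsto_atBot_mono' _ ?_
      ((tendsto_id.const_mul_atBot hc).atBot_add (tendsto_const_nhds (x := u 0)))
    filter_upwards [eventually_le_atBot 0] with x hx
    linarith [hgrowth hx, show c * id x = -(c * (0 - x)) by simp]
  have hsurj := hu.continuous.surjective htop hbot
  exact ⟨isDiffeo_of_strictMono hmono hsurj hu fun x => (hc.trans_le (hu' x)).ne', hmono⟩

lemma deriv_eq_neg_one_of_comp_self_eventuallyEq_id {f : ℝ → ℝ} {a : ℝ}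
    (hd : DifferentiableAt ℝ f a) (hf : Antitone f) (ha : f a = a) (hinv : f ∘ f =ᶠ[𝓝 a] id) :
    deriv f a = -1 := by
  have hchain : HasDerivAt (f ∘ f) (deriv f a * deriv f a) a := by
    have := (ha ▸ hd).hasDerivAt.comp a hd.hasDerivAt
    rwa [ha] at this
  have hsq : deriv f a * deriv f a = 1 :=
    hchain.unique ((hasDerivAt_id a).congr_of_eventuallyEq hinv)
  nlinarith [hf.deriv_nonpos (x := a)]

noncomputable def bochnerCoord (f : ℝ → ℝ) (x : ℝ) : ℝ := (x - f x) / 2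

lemma bochnerCoord_apply_of_apply_apply {f : ℝ → ℝ} {x : ℝ} (hx : f (f x) = x) :
    bochnerCoord f (f x) = -bochnerCoord f x := by
  simp only [bochnerCoord, hx]; ring

lemma hasDerivAt_bochnerCoord {f : ℝ → ℝ} {f' x : ℝ} (hf : HasDerivAt f f' x) :
    HasDerivAt (bochnerCoord f) ((1 - f') / 2) x :=
  ((hasDerivAt_id x).sub hf).div_const 2

lemma hasDerivAt_bochnerCoord_one {f : ℝ → ℝ} {a : ℝ} (hd : DifferentiableAt ℝ f a)
    (hf : Antitone f) (ha : f a = a) (hinv : f ∘ f =ᶠ[𝓝 a] id) :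
    HasDerivAt (bochnerCoord f) 1 a := by
  have := hasDerivAt_bochnerCoord hd.hasDerivAt
  rwa [deriv_eq_neg_one_of_comp_self_eventuallyEq_id hd hf ha hinv,
    show (1 - -1 : ℝ) / 2 = 1 by norm_num] at this

lemma contDiff_bochnerCoord {f : ℝ → ℝ} {n : WithTop ℕ∞} (hf : ContDiff ℝ n f) :
    ContDiff ℝ n (bochnerCoord f) :=
  (contDiff_id.sub hf).div_const 2

lemma isDiffeo_bochnerCoord {f : ℝ → ℝ} (hf : ContDiff ℝ (⊤ : ℕ∞) f) (ha : Antitone f) :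
    IsDiffeo (bochnerCoord f) ∧ StrictMono (bochnerCoord f) := by
  refine isDiffeo_of_le_deriv one_half_pos (contDiff_bochnerCoord hf) fun x => ?_
  rw [(hasDerivAt_bochnerCoord (hf.differentiable (by simp) x).hasDerivAt).deriv]
  linarith [ha.deriv_nonpos (x := x)]

lemma exists_conj_near_zero_of_comp_self_eventuallyEq_id {f g : ℝ → ℝ}
    (hf : ContDiff ℝ (⊤ : ℕ∞) f) (hg : ContDiff ℝ (⊤ : ℕ∞) g) (hfa : Antitone f)
    (hga : Antitone g) (hf0 : f 0 = 0) (hg0 : g 0 = 0) (hfinv : f ∘ f =ᶠ[𝓝 0] id)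
    (hginv : g ∘ g =ᶠ[𝓝 0] id) :
    ∃ u : ℝ → ℝ, ContDiff ℝ (⊤ : ℕ∞) u ∧ u 0 = 0 ∧ HasDerivAt u 1 0 ∧
      u ∘ f =ᶠ[𝓝 0] g ∘ u := by
  obtain ⟨hψ, hψm⟩ := isDiffeo_bochnerCoord hg hga
  set ψ := bochnerCoord g
  set φ := bochnerCoord f
  have hψ0 : ψ 0 = 0 := by simp [ψ, bochnerCoord, hg0]
  have hψ'0 : HasDerivAt ψ 1 0 :=
    hasDerivAt_bochnerCoord_one (hg.differentiable (by simp) 0) hga hg0 hginv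
  have hφ'0 : HasDerivAt φ 1 0 :=
    hasDerivAt_bochnerCoord_one (hf.differentiable (by simp) 0) hfa hf0 hfinv
  have hψinv0 : invFun ψ 0 = 0 := by simpa [hψ0] using hψ.invFun_apply_apply 0
  have hψinv'0 : HasDerivAt (invFun ψ) 1 (φ 0) := by
    simpa [φ, bochnerCoord, hf0] using
      HasDerivAt.of_local_left_inverse hψ.invFun.contDiff.continuous.continuousAt
        (by rwa [hψinv0]) one_ne_zero (Eventually.of_forall hψ.apply_invFun_apply)
  set u := invFun ψ ∘ φ
  have hu0 : u 0 = 0 := by simp [u, φ, bochnerCoord, hf0, hψinv0]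
  have hu : ContDiff ℝ (⊤ : ℕ∞) u := hψ.invFun.contDiff.comp (contDiff_bochnerCoord hf)
  refine ⟨u, hu, hu0, by simpa using hψinv'0.comp 0 hφ'0, ?_⟩
  have hu_tendsto : Tendsto u (𝓝 0) (𝓝 0) := hu.continuous.tendsto' 0 0 hu0
  filter_upwards [hfinv, hu_tendsto.eventually hginv] with x hfx hgux
  apply hψm.injective
  simp only [comp_apply, id] at hfx hgux ⊢
  have hψu : ∀ y, ψ (u y) = φ y := fun y => hψ.apply_invFun_apply (φ y)
  have hφf : φ (f x) = -φ x := bochnerCoord_apply_of_apply_apply hfx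
  have hψg : ψ (g (u x)) = -ψ (u x) := bochnerCoord_apply_of_apply_apply hgux
  rw [hψu, hφf, hψg, hψu]

lemma exists_pos_abs_deriv_le_and_abs_le {v : ℝ → ℝ} (hv : ContDiff ℝ 1 v) (h0 : v 0 = 0)
    (h0' : deriv v 0 = 0) {η : ℝ} (hη : 0 < η) :
    ∃ b > 0, ∀ x, |x| ≤ b → |deriv v x| ≤ η ∧ |v x| ≤ η * |x| := by
  obtain ⟨ε, hε, hball⟩ :=
    Metric.continuousAt_iff.1 ((hv.continuous_deriv le_rfl).continuousAt (x := 0)) η hη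
  have hd' : ∀ x, |x| ≤ ε / 2 → |deriv v x| ≤ η := fun x hx => by
    have hxε : dist x 0 < ε := by
      simp only [dist_zero_right, Real.norm_eq_abs]; linarith
    simpa [h0', Real.dist_eq] using (hball hxε).le
  refine ⟨ε / 2, by positivity, fun x hx => ⟨hd' x hx, ?_⟩⟩
  have := (convex_Icc (-(ε / 2)) (ε / 2)).norm_image_sub_le_of_norm_deriv_le
    (fun t _ => (hv.differentiable one_ne_zero).differentiableAt)
    (fun t ht => hd' t (abs_le.2 ht)) (x := 0) (y := x)
    (by constructor <;> linarith) (abs_le.1 hx)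
  simpa [h0] using this

lemma le_deriv_add_mul_of_cutoff {ρ v : ℝ → ℝ} {b C η : ℝ} (hb : 0 < b)
    (hρ : Differentiable ℝ ρ) (hρ_mem : ∀ t, ρ t ∈ Icc (0 : ℝ) 1) (hρ' : ∀ t, |deriv ρ t| ≤ C)
    (hρ_out : ∀ t, 1 < |t| → ρ t = 0 ∧ deriv ρ t = 0) (hv : Differentiable ℝ v)
    (hvb : ∀ x, |x| ≤ b → |deriv v x| ≤ η ∧ |v x| ≤ η * |x|) (x : ℝ) :
    1 - (C + 1) * η ≤ deriv (fun x => x + ρ (x / b) * v x) x := by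
  have hρb : HasDerivAt (fun x => ρ (x / b)) (deriv ρ (x / b) * (1 / b)) x :=
    (hρ _).hasDerivAt.comp x ((hasDerivAt_id x).div_const b)
  have hd : HasDerivAt (fun x => x + ρ (x / b) * v x)
      (1 + (deriv ρ (x / b) * (1 / b) * v x + ρ (x / b) * deriv v x)) x :=
    (hasDerivAt_id' x).add (hρb.mul (hv x).hasDerivAt)
  rw [hd.deriv]
  have hη : 0 ≤ η := (abs_nonneg _).trans (hvb 0 (by simp [hb.le])).1
  have hC : 0 ≤ C := (abs_nonneg _).trans (hρ' 0)
  rcases le_or_gt |x| b with hx | hx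
  · obtain ⟨hv'x, hvx⟩ := hvb x hx
    have h1 : |deriv ρ (x / b) * (1 / b) * v x| ≤ C * η := by
      rw [abs_mul, abs_mul, abs_of_pos (one_div_pos.2 hb)]
      calc |deriv ρ (x / b)| * (1 / b) * |v x| ≤ C * (1 / b) * (η * b) := by
            gcongr
            · exact hρ' _
            · exact hvx.trans (by gcongr)
        _ = C * η := by field_simp
    have h2 : |ρ (x / b) * deriv v x| ≤ η := by
      rw [abs_mul, abs_of_nonneg (hρ_mem _).1]
      exact (mul_le_of_le_one_left (abs_nonneg _) (hρ_mem _).2).trans hv'x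
    linarith [neg_abs_le (deriv ρ (x / b) * (1 / b) * v x), neg_abs_le (ρ (x / b) * deriv v x)]
  · obtain ⟨hρx, hρ'x⟩ := hρ_out (x / b) (by rwa [abs_div, abs_of_pos hb, one_lt_div hb])
    simp only [hρx, hρ'x]
    nlinarith

lemma exists_eventuallyEq_and_eq_id_outside {u₀ : ℝ → ℝ} (hu₀ : ContDiff ℝ (⊤ : ℕ∞) u₀)
    (h0 : u₀ 0 = 0) (h1 : HasDerivAt u₀ 1 0) {δ : ℝ} (hδ : 0 < δ) :
    ∃ u : ℝ → ℝ, ContDiff ℝ (⊤ : ℕ∞) u ∧ (∀ x, 1 / 2 ≤ deriv u x) ∧ u =ᶠ[𝓝 0] u₀ ∧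
      ∀ x, δ ≤ |x| → u x = x := by
  let ρ : ContDiffBump (0 : ℝ) := ⟨1 / 2, 1, by norm_num, by norm_num⟩
  have hρ : ContDiff ℝ (⊤ : ℕ∞) ρ := ρ.contDiff
  obtain ⟨C, hC⟩ := (hρ.continuous_deriv (by simp)).bounded_above_of_compact_support
    ρ.hasCompactSupport.deriv
  have hC0 : 0 ≤ C := (norm_nonneg _).trans (hC 0)
  have hρ_out : ∀ t : ℝ, 1 < |t| → ρ t = 0 ∧ deriv ρ t = 0 := fun t ht => by
    have ht' : t ∉ tsupport ρ := by
      rw [ρ.tsupport_eq]; simpa using ht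
    exact ⟨image_eq_zero_of_notMem_tsupport ht',
      notMem_support.1 fun h => ht' (support_deriv_subset h)⟩
  set v : ℝ → ℝ := fun x => u₀ x - x
  have hv : ContDiff ℝ (⊤ : ℕ∞) v := hu₀.sub contDiff_id
  have hv' : deriv v 0 = 0 :=
    (show HasDerivAt v (1 - 1) 0 from h1.sub (hasDerivAt_id' 0)).deriv.trans (sub_self 1)
  obtain ⟨b, hb, hvb⟩ := exists_pos_abs_deriv_le_and_abs_le (hv.of_le (by simp))
    (by simp [v, h0]) hv' (η := 1 / (2 * (C + 1))) (by positivity)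
  set b' := min b δ
  have hb' : 0 < b' := lt_min hb hδ
  refine ⟨fun x => x + ρ (x / b') * v x, ?_, fun x => ?_, ?_, fun x hx => ?_⟩
  · exact contDiff_id.add ((hρ.comp (contDiff_id.div_const _)).mul hv)
  · have := le_deriv_add_mul_of_cutoff hb' (hρ.differentiable (by simp))
      (fun t => ⟨ρ.nonneg, ρ.le_one⟩) hC hρ_out (hv.differentiable (by simp))
      (fun x hx => hvb x (hx.trans (min_le_left _ _))) x
    have hη : (C + 1) * (1 / (2 * (C + 1))) = 1 / 2 := by field_simp
    linarith
  · filter_upwards [Metric.ball_mem_nhds 0 (half_pos hb')] with x hx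
    have : ρ (x / b') = 1 := ρ.one_of_mem_closedBall <| by
      have : |x| / b' ≤ 1 / 2 := by
        rw [div_le_iff₀ hb']
        simp only [Metric.mem_ball, dist_zero_right, Real.norm_eq_abs] at hx
        linarith
      simp only [Metric.mem_closedBall, dist_zero_right, Real.norm_eq_abs, abs_div,
        abs_of_pos hb']
      exact this
    simp [this, v]
  · have : ρ (x / b') = 0 := ρ.zero_of_le_dist <| by
      have : 1 ≤ |x| / b' := by rw [le_div_iff₀ hb']; linarith [min_le_right b δ]
      simpa [abs_div, abs_of_pos hb'] using this
    simp [this]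

lemma apply_comm_of_eqOn_Icc {T u : ℝ → ℝ} {δ : ℝ} (hδ : 0 ≤ δ) (hT : Monotone T)
    (hTδ : EqOn T id (Icc 0 δ))
    (hu : Monotone u) (hu0 : u 0 = 0) (hu_id : ∀ x, δ ≤ x → u x = x) {y : ℝ} (hy : 0 ≤ y) :
    u (T y) = T (u y) := by
  rcases le_or_gt y δ with hyδ | hδy
  · have huy : u y ∈ Icc 0 δ :=
      ⟨hu0 ▸ hu hy, (hu hyδ).trans (hu_id δ le_rfl).le⟩
    rw [hTδ ⟨hy, hyδ⟩, hTδ huy, id, id]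
  · have hTy : δ ≤ T y := (hTδ ⟨hδ, le_rfl⟩).symm.trans_le (hT hδy.le)
    rw [hu_id _ hTy, hu_id _ hδy.le]

lemma StrictAnti.invFun_pos_of_neg {f : ℝ → ℝ} (hf : Surjective f) (hfa : StrictAnti f)
    (hf0 : f 0 = 0) {x : ℝ} (hx : x < 0) : 0 < invFun f x :=
  hfa.lt_iff_gt.1 (by rwa [rightInverse_invFun hf x, hf0])

/-- For `x = f y < 0` the value `g (u y)` is forced by `k ∘ f = g ∘ k`. -/
noncomputable def conjExtension (f g u : ℝ → ℝ) (x : ℝ) : ℝ :=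
  if 0 ≤ x then u x else g (u (invFun f x))

section conjExtension

variable {f g u : ℝ → ℝ}

lemma conjExtension_of_nonneg {x : ℝ} (hx : 0 ≤ x) : conjExtension f g u x = u x := if_pos hx

lemma conjExtension_of_neg {x : ℝ} (hx : x < 0) :
    conjExtension f g u x = g (u (invFun f x)) := if_neg hx.not_ge

lemma conjExtension_comp (hf : Bijective f) (hfa : StrictAnti f) (hf0 : f 0 = 0)
    (hg0 : g 0 = 0) (hu0 : u 0 = 0) (hsq : f ∘ f = g ∘ g)
    (hcomm : ∀ y, 0 ≤ y → u (f (f y)) = f (f (u y))) :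
    conjExtension f g u ∘ f = g ∘ conjExtension f g u := by
  funext x
  simp only [comp_apply]
  rcases lt_trichotomy x 0 with hx | rfl | hx
  · have hfx : 0 < f x := hf0 ▸ hfa hx
    have hy := hfa.invFun_pos_of_neg hf.2 hf0 hx
    rw [conjExtension_of_nonneg hfx.le, conjExtension_of_neg hx, ← comp_apply (f := g),
      ← hsq, comp_apply, ← hcomm _ hy.le, rightInverse_invFun hf.2 x]
  · rw [hf0, conjExtension_of_nonneg le_rfl, hu0, hg0]
  · have hfx : f x < 0 := hf0 ▸ hfa hx
    rw [conjExtension_of_neg hfx, conjExtension_of_nonneg hx.le, leftInverse_invFun hf.1 x]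

lemma conjExtension_eventuallyEq (hf : IsDiffeo f) (hfa : StrictAnti f) (hf0 : f 0 = 0)
    (hkf : conjExtension f g u ∘ f = g ∘ conjExtension f g u) (hloc : u ∘ f =ᶠ[𝓝 0] g ∘ u) :
    conjExtension f g u =ᶠ[𝓝 0] u := by
  have hcomp : conjExtension f g u ∘ f =ᶠ[𝓝 0] u ∘ f := by
    filter_upwards [hloc] with y hy
    rcases le_or_gt 0 y with hy0 | hy0
    · rw [comp_apply, ← comp_apply (f := conjExtension f g u), hkf, comp_apply,
        conjExtension_of_nonneg hy0]
      exact hy.symm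
    · exact conjExtension_of_nonneg (hf0 ▸ hfa hy0).le
  have hinv0 : invFun f 0 = 0 := by simpa [hf0] using hf.invFun_apply_apply 0
  have htendsto : Tendsto (invFun f) (𝓝 0) (𝓝 0) :=
    hf.invFun.contDiff.continuous.tendsto' 0 0 hinv0
  filter_upwards [htendsto.eventually hcomp] with x hx
  simpa only [comp_apply, hf.apply_invFun_apply] using hx

lemma exists_isDiffeo_eventuallyEq_conjExtension (hf : IsDiffeo f) (hg : IsDiffeo g)
    (hu : IsDiffeo u) (h0 : conjExtension f g u =ᶠ[𝓝 0] u) (x : ℝ) :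
    ∃ p, IsDiffeo p ∧ conjExtension f g u =ᶠ[𝓝 x] p := by
  rcases lt_trichotomy x 0 with hx | rfl | hx
  · refine ⟨g ∘ u ∘ invFun f, hg.comp (hu.comp hf.invFun), ?_⟩
    filter_upwards [Iio_mem_nhds hx] with y hy
    exact conjExtension_of_neg hy
  · exact ⟨u, hu, h0⟩
  · refine ⟨u, hu, ?_⟩
    filter_upwards [Ioi_mem_nhds hx] with y hy
    exact conjExtension_of_nonneg (le_of_lt hy)

lemma strictMono_conjExtension (hf : Surjective f) (hfa : StrictAnti f) (hf0 : f 0 = 0)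
    (hga : StrictAnti g) (hg0 : g 0 = 0) (hum : StrictMono u) (hu0 : u 0 = 0) :
    StrictMono (conjExtension f g u) := by
  have hneg : ∀ x < 0, conjExtension f g u x < 0 := fun x hx => by
    rw [conjExtension_of_neg hx, ← hg0]
    exact hga (hu0 ▸ hum (hfa.invFun_pos_of_neg hf hf0 hx))
  intro x y hxy
  rcases le_or_gt 0 x with hx | hx
  · rw [conjExtension_of_nonneg hx, conjExtension_of_nonneg (hx.trans hxy.le)]
    exact hum hxy
  rcases le_or_gt 0 y with hy | hy
  · rw [conjExtension_of_nonneg hy]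
    exact (hneg x hx).trans_le (hu0 ▸ hum.monotone hy)
  · rw [conjExtension_of_neg hx, conjExtension_of_neg hy]
    refine hga (hum (hfa.lt_iff_gt.1 ?_))
    rwa [rightInverse_invFun hf, rightInverse_invFun hf]

lemma surjective_conjExtension (hg : Surjective g) (hga : StrictAnti g) (hg0 : g 0 = 0)
    (hu : Surjective u) (hum : StrictMono u) (hu0 : u 0 = 0)
    (hkf : conjExtension f g u ∘ f = g ∘ conjExtension f g u) :
    Surjective (conjExtension f g u) := by
  intro y
  rcases le_or_gt 0 y with hy | hy
  · obtain ⟨x, rfl⟩ := hu y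
    exact ⟨x, conjExtension_of_nonneg (hum.le_iff_le.1 (by rwa [hu0]))⟩
  · obtain ⟨z, rfl⟩ := hg y
    obtain ⟨x, rfl⟩ := hu z
    have hx : 0 < x := hum.lt_iff_lt.1 (by rw [hu0]; exact hga.lt_iff_gt.1 (by rwa [hg0]))
    refine ⟨f x, ?_⟩
    rw [← comp_apply (f := conjExtension f g u), hkf, comp_apply, conjExtension_of_nonneg hx.le]

lemma isDiffeo_conjExtension (hf : IsDiffeo f) (hg : IsDiffeo g)
    (hfa : StrictAnti f) (hga : StrictAnti g) (hf0 : f 0 = 0) (hg0 : g 0 = 0) (hu : IsDiffeo u)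
    (hum : StrictMono u) (hu0 : u 0 = 0)
    (hkf : conjExtension f g u ∘ f = g ∘ conjExtension f g u) (hloc : u ∘ f =ᶠ[𝓝 0] g ∘ u) :
    IsDiffeo (conjExtension f g u) ∧ StrictMono (conjExtension f g u) := by
  have hmono := strictMono_conjExtension hf.1.2 hfa hf0 hga hg0 hum hu0
  refine ⟨isDiffeo_of_eventuallyEq_isDiffeo hmono ?_ ?_, hmono⟩
  · exact surjective_conjExtension hg.1.2 hga hg0 hu.1.2 hum hu0 hkf
  · exact exists_isDiffeo_eventuallyEq_conjExtension hf hg hu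
      (conjExtension_eventuallyEq hf hfa hf0 hkf hloc)

end conjExtension

theorem conjugacy_when_square_involutive_near_zero
    (f g : ℝ → ℝ) (hf : IsDiffeo f) (hg : IsDiffeo g)
    (hfa : StrictAnti f) (hga : StrictAnti g)
    (hf0 : f 0 = 0) (hg0 : g 0 = 0)
    (hsq : f ∘ f = g ∘ g)
    (hint : (0 : ℝ) ∈ interior {x : ℝ | (f ∘ f) x = x}) :
    (∃ h : ℝ → ℝ, IsDiffeo h ∧ StrictMono h ∧ h 0 = 0 ∧
      h ∘ (f ∘ f) = (f ∘ f) ∘ h ∧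
      ∀ n : ℕ, 1 ≤ n → iteratedDeriv n (h ∘ f) 0 = iteratedDeriv n (g ∘ h) 0) ∧
    (∃ k : ℝ → ℝ, IsDiffeo k ∧ StrictMono k ∧ f = Function.invFun k ∘ g ∘ k) := by
  have hfinv : f ∘ f =ᶠ[𝓝 0] id := mem_interior_iff_mem_nhds.1 hint
  obtain ⟨δ, hδ, hball⟩ := Metric.mem_nhds_iff.1 hfinv
  obtain ⟨u₀, hu₀, hu₀0, hu₀', hu₀f⟩ := exists_conj_near_zero_of_comp_self_eventuallyEq_id
    hf.contDiff hg.contDiff hfa.antitone hga.antitone hf0 hg0 hfinv (hsq ▸ hfinv)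
  obtain ⟨u, hu, hu', huu₀, hu_id⟩ :=
    exists_eventuallyEq_and_eq_id_outside hu₀ hu₀0 hu₀' (half_pos hδ)
  obtain ⟨hud, hum⟩ := isDiffeo_of_le_deriv one_half_pos hu hu'
  have hu0 : u 0 = 0 := huu₀.eq_of_nhds.trans hu₀0
  have hcomm : ∀ y, 0 ≤ y → u (f (f y)) = f (f (u y)) := fun y hy =>
    apply_comm_of_eqOn_Icc (half_pos hδ).le (hfa.antitone.comp hfa.antitone)
      (fun x hx => hball <| by
        simp only [Metric.mem_ball, dist_zero_right, Real.norm_eq_abs, abs_of_nonneg hx.1]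
        linarith [hx.2]) hum.monotone hu0
      (fun x hx => hu_id x (hx.trans (le_abs_self x))) hy
  have hloc : u ∘ f =ᶠ[𝓝 0] g ∘ u := by
    filter_upwards [(hf.contDiff.continuous.tendsto' 0 0 hf0).eventually huu₀, hu₀f, huu₀]
      with x h1 h2 h3
    simp only [comp_apply] at h1 h2 ⊢
    rw [h1, h2, h3]
  have hkf := conjExtension_comp hf.1 hfa hf0 hg0 hu0 hsq hcomm
  obtain ⟨hk, hkm⟩ := isDiffeo_conjExtension hf hg hfa hga hf0 hg0 hud hum hu0 hkf hloc
  refine ⟨⟨conjExtension f g u, hk, hkm, (conjExtension_of_nonneg le_rfl).trans hu0, ?_,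
    fun n _ => by rw [hkf]⟩, conjExtension f g u, hk, hkm, ?_⟩
  · rw [← comp_assoc, hkf, comp_assoc, hkf, ← comp_assoc, ← hsq, comp_assoc]
  · rw [← hkf, ← comp_assoc, invFun_comp hk.1.1, id_comp]
end
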